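/- There exists $\mu_d < \infty$, depending only on $d$, such that for every $\mu > \mu_d$: if $(N(x))_{x \in \mathbb{Z}^d}$ are independent Poisson($\mu$) random variables, then $\sum_{C} P\big\{\sum_{x \in C} N(x) < \tfrac{1}{2}\mu |C|\big\} < \infty$, where the sum runs over all finite connected subsets $C$ of $\mathbb{Z}^d$ containing the origin. -/

import Mathlib

open MeasureTheory ProbabilityTheory
open scoped ENNReal NNReal

/-- Two points of `ℤ^d` are nearest-neighbor adjacent if they are at `ℓ^1` distance 1. -/
def NNAdj {d : ℕ} (v w : Fin d → ℤ) : Prop := (∑ i, |v i - w i|) = 1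

/-- A set `A` is connected for the adjacency relation `adj`. -/
def ConnectedIn {α : Type*} (adj : α → α → Prop) (A : Set α) : Prop :=
  ∀ x ∈ A, ∀ y ∈ A, Relation.ReflTransGen (fun a b => a ∈ A ∧ b ∈ A ∧ adj a b) x y

/-!
A finite connected `C ∋ 0` with `n` sites is traced out by a nearest-neighbour walk from the
origin of length `2(n - 1)`: while the walk misses part of `C`, connectivity gives an edge
`x → y` leaving the visited set, and the detour `x → y → x` adds `y` at the cost of two steps.
Such a walk is a word of unit steps, so there are at most `K ^ (2(n - 1))` such sets, `K` being
the number of unit steps. A Chernoff bound with the Poisson moment generating function at `-1`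
gives `P{∑_C N < μn/2} ≤ exp(μn(1/2 + e⁻¹ - 1)) ≤ exp(-μ/8)ⁿ`, as `e⁻¹ ≤ 3/8`. The series is
then dominated by a geometric one with ratio `K² e^{-μ/8}`, which is `< 1` once `μ > 16K`.
-/

theorem Relation.ReflTransGen.exists_rel_of_mem_of_notMem {α : Type*} {r : α → α → Prop}
    {s : Set α} {a b : α} (h : Relation.ReflTransGen r a b) (ha : a ∈ s) (hb : b ∉ s) :
    ∃ x ∈ s, ∃ y ∉ s, r x y := by
  induction h with
  | refl => exact absurd ha hb
  | @tail b c _ hbc ih =>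
    by_cases hbs : b ∈ s
    · exact ⟨b, hbs, c, hb, hbc⟩
    · exact ih hbs

namespace List

theorem IsChain.exists_detour {α : Type*} [DecidableEq α] {r : α → α → Prop} {a w v : α}
    {l : List α} (h : IsChain r (a :: l)) (hw : w ∈ a :: l) (hwv : r w v) (hvw : r v w) :
    ∃ l', IsChain r (a :: l') ∧ l'.length = l.length + 2 ∧
      (a :: l').toFinset = insert v (a :: l).toFinset := by
  obtain ⟨s, t, hst⟩ := append_of_mem hw
  rcases s with _ | ⟨b, s⟩
  · obtain ⟨rfl, rfl⟩ := cons.inj hst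
    refine ⟨v :: a :: l, ?_, rfl, ?_⟩
    · simpa [isChain_cons_cons, hwv, hvw] using h
    · ext; simp
  · rw [cons_append, cons.injEq] at hst
    obtain ⟨rfl, rfl⟩ := hst
    refine ⟨s ++ w :: v :: w :: t, ?_, by simp only [length_append, length_cons]; omega, ?_⟩
    · rw [← cons_append, isChain_split] at h
      rw [← cons_append, isChain_append_cons_cons]
      exact ⟨h.1, hwv, h.2.cons_cons hvw⟩
    · ext
      simp only [mem_toFinset, Finset.mem_insert, mem_cons, mem_append]
      tauto

theorem IsChain.exists_scanl_eq {G : Type*} [AddCommGroup G] {S : Set G} {adj : G → G → Prop}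
    (hS : ∀ x y, adj x y → y - x ∈ S) {a : G} {l : List G} (h : (a :: l).IsChain adj) :
    ∃ ss : List S, ss.length = l.length ∧ (ss.map (↑)).scanl (· + ·) a = a :: l := by
  induction l generalizing a with
  | nil => exact ⟨[], rfl, by simp⟩
  | cons b t ih =>
    rw [isChain_cons_cons] at h
    obtain ⟨ss, hlen, hscan⟩ := ih h.2
    refine ⟨⟨b - a, hS a b h.1⟩ :: ss, by simp [hlen], ?_⟩
    simp only [map_cons, scanl_cons, add_sub_cancel, hscan]

end List

namespace ConnectedIn

theorem exists_isChain_toFinset_eq {α : Type*} [DecidableEq α] {adj : α → α → Prop}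
    [Std.Symm adj] {C : Finset α} (hC : ConnectedIn adj (C : Set α)) {a : α} (ha : a ∈ C) :
    ∃ l, (a :: l).IsChain adj ∧ (a :: l).toFinset = C ∧ l.length = 2 * (C.card - 1) := by
  have grow : ∀ k < C.card, ∃ l, (a :: l).IsChain adj ∧ (a :: l).toFinset ⊆ C ∧
      (a :: l).toFinset.card = k + 1 ∧ l.length = 2 * k := by
    intro k
    induction k with
    | zero => exact fun _ => ⟨[], .singleton a, by simpa using ha, by simp, rfl⟩
    | succ k ih =>
      intro hk
      obtain ⟨l, hl, hsub, hcard, hlen⟩ := ih (by omega)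
      obtain ⟨b, hbC, hbl⟩ := Finset.exists_mem_notMem_of_card_lt_card (s := (a :: l).toFinset)
        (t := C) (by omega)
      obtain ⟨x, hx, y, hy, -, hyC, hxy⟩ :=
        (hC a ha b hbC).exists_rel_of_mem_of_notMem (s := (a :: l).toFinset) (by simp) hbl
      obtain ⟨l', hl', hlen', hset⟩ :=
        hl.exists_detour (List.mem_toFinset.1 hx) hxy (Std.Symm.symm x y hxy)
      refine ⟨l', hl', ?_, ?_, by omega⟩
      · rw [hset]
        exact Finset.insert_subset hyC hsub
      · rw [hset, Finset.card_insert_of_notMem hy, hcard]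
  have hpos : 0 < C.card := Finset.card_pos.2 ⟨a, ha⟩
  obtain ⟨l, hl, hsub, hcard, hlen⟩ := grow (C.card - 1) (by omega)
  exact ⟨l, hl, Finset.eq_of_subset_of_card_le hsub (by omega), hlen⟩

variable {G : Type*} [AddCommGroup G] [DecidableEq G] {adj : G → G → Prop} [Std.Symm adj]
  {S : Set G}

theorem exists_injective_encoding (hS : ∀ x y, adj x y → y - x ∈ S) (a : G) :
    ∃ enc : {C : Finset G // a ∈ C ∧ ConnectedIn adj (C : Set G)} → Σ m, List.Vector S (2 * m),
      Function.Injective enc ∧ ∀ C, C.1.card = (enc C).1 + 1 := by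
  have hsteps : ∀ C : {C : Finset G // a ∈ C ∧ ConnectedIn adj (C : Set G)},
      ∃ ss : List S, ss.length = 2 * (C.1.card - 1) ∧
        ((ss.map (↑)).scanl (· + ·) a).toFinset = C.1 := by
    rintro ⟨C, ha, hC⟩
    obtain ⟨l, hl, hset, hlen⟩ := hC.exists_isChain_toFinset_eq ha
    obtain ⟨ss, hss, hscan⟩ := hl.exists_scanl_eq hS
    exact ⟨ss, hss.trans hlen, by rw [hscan, hset]⟩
  choose ss hlen hset using hsteps
  refine ⟨fun C => ⟨C.1.card - 1, ⟨ss C, hlen C⟩⟩, fun C₁ C₂ h => ?_, fun C => ?_⟩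
  · have := congrArg (fun p : Σ m, List.Vector S (2 * m) =>
      ((p.2.toList.map (↑)).scanl (· + ·) a).toFinset) h
    simp only [List.Vector.toList_mk, hset] at this
    exact Subtype.ext this
  · have : 0 < C.1.card := Finset.card_pos.2 ⟨a, C.2.1⟩
    dsimp only
    omega

theorem tsum_pow_card_le [Finite S] (hS : ∀ x y, adj x y → y - x ∈ S) (a : G) (r : ℝ≥0∞) :
    ∑' C : {C : Finset G // a ∈ C ∧ ConnectedIn adj (C : Set G)}, r ^ C.1.card ≤
      r * (1 - (Nat.card S : ℝ≥0∞) ^ 2 * r)⁻¹ := by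
  have := Fintype.ofFinite S
  obtain ⟨enc, henc, hcard⟩ := exists_injective_encoding hS a
  calc ∑' C : {C : Finset G // a ∈ C ∧ ConnectedIn adj (C : Set G)}, r ^ C.1.card
      = ∑' C, r ^ ((enc C).1 + 1) := by simp only [hcard]
    _ ≤ ∑' p : Σ m, List.Vector S (2 * m), r ^ (p.1 + 1) :=
      ENNReal.tsum_comp_le_tsum_of_injective henc (fun p => r ^ (p.1 + 1))
    _ = ∑' m : ℕ, ∑' _ : List.Vector S (2 * m), r ^ (m + 1) := ENNReal.tsum_sigma' _
    _ = ∑' m : ℕ, r * ((Nat.card S : ℝ≥0∞) ^ 2 * r) ^ m := by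
      congr 1; funext m
      rw [tsum_fintype, Finset.sum_const, Finset.card_univ, card_vector, nsmul_eq_mul,
        Nat.card_eq_fintype_card]
      push_cast
      ring
    _ = r * (1 - (Nat.card S : ℝ≥0∞) ^ 2 * r)⁻¹ := by
      rw [ENNReal.tsum_mul_left, ENNReal.tsum_geometric]

end ConnectedIn

namespace ProbabilityTheory

theorem integral_exp_mul_poissonMeasure (r : ℝ≥0) (t : ℝ) :
    ∫ n, Real.exp (t * n) ∂poissonMeasure r = Real.exp (r * (Real.exp t - 1)) := by
  have hsum := (NormedSpace.expSeries_div_hasSum_exp ((r : ℝ) * Real.exp t)).mul_left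
    (Real.exp (-r))
  rw [integral_poissonMeasure]
  convert hsum.tsum_eq using 1
  · congr 1; funext n
    rw [smul_eq_mul, mul_pow, ← Real.exp_nat_mul, mul_comm t]
    ring
  · rw [← Real.exp_eq_exp_ℝ, ← Real.exp_add]
    ring_nf

variable {Ω : Type*} [MeasurableSpace Ω] {P : Measure Ω} {μ : ℝ≥0}

theorem aemeasurable_of_map_eq_poissonMeasure {N : Ω → ℕ} (hN : P.map N = poissonMeasure μ) :
    AEMeasurable N P :=
  .of_map_ne_zero (hN ▸ IsProbabilityMeasure.ne_zero _)

theorem mgf_of_map_eq_poissonMeasure {N : Ω → ℕ} (hN : P.map N = poissonMeasure μ) (t : ℝ) :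
    mgf (fun ω => (N ω : ℝ)) P t = Real.exp (μ * (Real.exp t - 1)) := by
  rw [mgf, ← integral_exp_mul_poissonMeasure, ← hN,
    integral_map (aemeasurable_of_map_eq_poissonMeasure hN) (by fun_prop)]

theorem measure_sum_lt_half_le [IsProbabilityMeasure P] {ι : Type*} {N : ι → Ω → ℕ}
    (hN : iIndepFun N P) (hmap : ∀ i, P.map (N i) = poissonMeasure μ) (s : Finset ι) :
    P {ω | ∑ i ∈ s, (N i ω : ℝ) < μ * s.card / 2} ≤
      ENNReal.ofReal (Real.exp (-μ / 8)) ^ s.card := by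
  set X : ι → Ω → ℝ := fun i ω => (N i ω : ℝ)
  have hmeas : ∀ i, AEMeasurable (X i) P := fun i =>
    measurable_from_top.comp_aemeasurable (aemeasurable_of_map_eq_poissonMeasure (hmap i))
  have hX : iIndepFun X P := hN.comp (fun _ (k : ℕ) => (k : ℝ)) (fun _ => measurable_from_top)
  have hnonneg (ω : Ω) : 0 ≤ (∑ i ∈ s, X i) ω := by
    rw [Finset.sum_apply]
    positivity
  have hint : Integrable (fun ω => Real.exp (-1 * (∑ i ∈ s, X i) ω)) P :=
    .of_mem_Icc 0 1 (by fun_prop) <| ae_of_all _ fun ω =>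
      ⟨(Real.exp_pos _).le, Real.exp_le_one_iff.2 (by linarith [hnonneg ω])⟩
  have hmgf : mgf (∑ i ∈ s, X i) P (-1) = Real.exp (μ * (Real.exp (-1) - 1)) ^ s.card := by
    rw [hX.mgf_sum₀ hmeas,
      Finset.prod_eq_pow_card fun i _ => mgf_of_map_eq_poissonMeasure (hmap i) _]
  have hchernoff := measure_le_le_exp_mul_mgf (μ := P) (μ * s.card / 2) (by norm_num) hint
  have he : Real.exp (-1) ≤ 3 / 8 := by
    rw [Real.exp_neg, inv_le_comm₀ (Real.exp_pos 1) (by norm_num)]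
    linarith [Real.exp_one_gt_d9]
  have hexp : Real.exp (-(-1) * (μ * s.card / 2)) * Real.exp (μ * (Real.exp (-1) - 1)) ^ s.card
      ≤ Real.exp (-μ / 8) ^ s.card := by
    rw [← Real.exp_nat_mul, ← Real.exp_nat_mul, ← Real.exp_add, Real.exp_le_exp]
    nlinarith [mul_nonneg μ.coe_nonneg (Nat.cast_nonneg (α := ℝ) s.card)]
  calc P {ω | ∑ i ∈ s, (N i ω : ℝ) < μ * s.card / 2}
      ≤ P {ω | (∑ i ∈ s, X i) ω ≤ μ * s.card / 2} :=
        measure_mono fun ω hω => by simpa [X] using hω.le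
    _ ≤ ENNReal.ofReal (Real.exp (-μ / 8) ^ s.card) := by
        rw [ENNReal.le_ofReal_iff_toReal_le (measure_ne_top _ _) (by positivity)]
        exact (hmgf ▸ hchernoff).trans hexp
    _ = ENNReal.ofReal (Real.exp (-μ / 8)) ^ s.card := ENNReal.ofReal_pow (Real.exp_pos _).le _

end ProbabilityTheory

section Lattice

variable {d : ℕ}

instance : Std.Symm (@NNAdj d) :=
  ⟨fun v w h => by simpa only [NNAdj, abs_sub_comm] using h⟩

def unitSteps (d : ℕ) : Set (Fin d → ℤ) := {u | ∑ i, |u i| = 1}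

instance : Finite (unitSteps d) := by
  refine Set.Finite.to_subtype ((Set.finite_Icc (-1) 1).subset fun u hu => ?_)
  have hle (i : Fin d) : |u i| ≤ 1 :=
    hu ▸ Finset.single_le_sum (fun j _ => abs_nonneg (u j)) (Finset.mem_univ i)
  exact ⟨fun i => (abs_le.1 (hle i)).1, fun i => (abs_le.1 (hle i)).2⟩

theorem sub_mem_unitSteps {x y : Fin d → ℤ} (h : NNAdj x y) : y - x ∈ unitSteps d :=
  Std.Symm.symm x y h

end Lattice

theorem natCast_sq_mul_ofReal_exp_lt_one {K : ℕ} {μ : ℝ} (h : 16 * K < μ) :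
    (K : ℝ≥0∞) ^ 2 * ENNReal.ofReal (Real.exp (-μ / 8)) < 1 := by
  have hK : (K : ℝ) ^ 2 ≤ Real.exp (2 * K) := by
    rw [show (2 : ℝ) * K = K + K by ring, Real.exp_add, sq]
    have := Real.add_one_le_exp (K : ℝ)
    gcongr <;> linarith
  have hlt : (K : ℝ) ^ 2 * Real.exp (-μ / 8) < 1 :=
    calc (K : ℝ) ^ 2 * Real.exp (-μ / 8) ≤ Real.exp (2 * K) * Real.exp (-μ / 8) := by gcongr
      _ = Real.exp (2 * K - μ / 8) := by rw [← Real.exp_add]; ring_nf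
      _ < 1 := Real.exp_lt_one_iff.2 (by linarith)
  rw [← ENNReal.ofReal_natCast, ← ENNReal.ofReal_pow (by positivity),
    ← ENNReal.ofReal_mul (by positivity)]
  exact ENNReal.ofReal_lt_one.2 hlt

theorem summable_poisson_deviation_general (d : ℕ) :
    ∃ μd : ℝ≥0, ∀ μ : ℝ≥0, μd < μ →
      ∀ (Ω : Type) (mΩ : MeasurableSpace Ω) (P : Measure Ω), IsProbabilityMeasure P →
      ∀ N : (Fin d → ℤ) → Ω → ℕ,
        iIndepFun N P →
        (∀ x, Measure.map (N x) P = poissonMeasure μ) →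
        (∑' C : {C : Finset (Fin d → ℤ) //
            (0 : Fin d → ℤ) ∈ C ∧ ConnectedIn NNAdj (C : Set (Fin d → ℤ))},
          P {ω | (∑ x ∈ C.1, (N x ω : ℝ)) < (μ : ℝ) * C.1.card / 2}) < ⊤ := by
  refine ⟨16 * Nat.card (unitSteps d), fun μ hμ Ω _ P _ N hN hmap => ?_⟩
  set r := ENNReal.ofReal (Real.exp (-μ / 8))
  have hq : (Nat.card (unitSteps d) : ℝ≥0∞) ^ 2 * r < 1 :=
    natCast_sq_mul_ofReal_exp_lt_one (by exact_mod_cast hμ)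
  calc _ ≤ ∑' C : {C : Finset (Fin d → ℤ) //
            (0 : Fin d → ℤ) ∈ C ∧ ConnectedIn NNAdj (C : Set (Fin d → ℤ))}, r ^ C.1.card :=
        ENNReal.tsum_le_tsum fun C => measure_sum_lt_half_le hN hmap C.1
    _ ≤ r * (1 - (Nat.card (unitSteps d) : ℝ≥0∞) ^ 2 * r)⁻¹ :=
        ConnectedIn.tsum_pow_card_le (fun _ _ => sub_mem_unitSteps) 0 r
    _ < ⊤ := ENNReal.mul_lt_top ENNReal.ofReal_lt_top (ENNReal.inv_lt_top.2 (tsub_pos_of_lt hq))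

/-- inequality (1.3aa): there is a `μ_d < ∞` depending only on `d` such
that for every `μ > μ_d`, if `(N(x))_{x ∈ ℤ^d}` are i.i.d. Poisson(`μ`) variables, then the
sum over all finite connected `C ∋ 0` of `P{∑_{x ∈ C} N(x) < μ|C|/2}` is finite. -/
theorem summable_poisson_deviation (d : ℕ) (hd : 1 ≤ d) :
    ∃ μd : ℝ≥0, ∀ μ : ℝ≥0, μd < μ →
      ∀ (Ω : Type) (mΩ : MeasurableSpace Ω) (P : Measure Ω), IsProbabilityMeasure P →
      ∀ N : (Fin d → ℤ) → Ω → ℕ,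
        iIndepFun N P →
        (∀ x, Measure.map (N x) P = poissonMeasure μ) →
        (∑' C : {C : Finset (Fin d → ℤ) //
            (0 : Fin d → ℤ) ∈ C ∧ ConnectedIn NNAdj (C : Set (Fin d → ℤ))},
          P {ω | (∑ x ∈ C.1, (N x ω : ℝ)) < (μ : ℝ) * C.1.card / 2}) < ⊤ :=
  summable_poisson_deviation_general d
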